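/- Let μ be a Borel probability measure on [0,1) with a Lebesgue density f₀ satisfying f₀ ≤ F pointwise for some F > 0. Then for every M > (1/3)(sqrt(log 2) * sqrt(18F + log 2) + log 2) there exists C > 0 depending only on F and M such that the following holds: for every n ≥ 1, every L ∈ ℕ, and every family X₁,…,Xₙ of independent random variables each with law μ, the probability that there exist l ∈ ℕ and 0 ≤ k < 2^l with |#{i : Xᵢ ∈ I_{l,k}} − n μ(I_{l,k})| > M * max( sqrt(n(l+L) 2^{−l}), l + L ) is at most C * 2^{−L}. -/

import Mathlib

/-!
Fix a dyadic interval `I = I_{l,k}` and put `a = l + L`. The deviation `#{i | Xᵢ ∈ I} - n μ(I)` is a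
sum of `n` independent centred Bernoulli variables with `n μ(I) ≤ n F 2^{-l}`, so Bernstein's
inequality bounds the probability that it exceeds `t = M max(√(n a 2^{-l}), a)` by
`2 exp(-t² / (2 (n F 2^{-l} + t / 3))) ≤ 2 exp(-β a)`, where `β = M² / (2 (F + M / 3))`.
The condition on `M` says exactly that `β > log 2`, so the union bound over the `2^l` intervals of
each level sums to `∑ₗ 2^l · 2 e^{-β (l + L)} = 2 e^{-β L} / (1 - 2 e^{-β}) ≤ C 2^{-L}`.
-/

open MeasureTheory ProbabilityTheory

open scoped Classical

def dyadicI (l k : ℕ) : Set ℝ := Set.Ico ((k : ℝ) / 2 ^ l) (((k : ℝ) + 1) / 2 ^ l)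

open Real

lemma nonneg_of_hasDerivAt_of_nonneg {g g' : ℝ → ℝ} (hg : ∀ x, HasDerivAt g (g' x) x)
    (hg0 : g 0 = 0) (hg' : ∀ x, 0 < x → 0 ≤ g' x) {s : ℝ} (hs : 0 ≤ s) : 0 ≤ g s := by
  have hmono : MonotoneOn g (Set.Ici 0) :=
    monotoneOn_of_hasDerivWithinAt_nonneg (convex_Ici 0)
      (continuous_iff_continuousAt.2 fun x => (hg x).continuousAt).continuousOn
      (fun x _ => (hg x).hasDerivWithinAt) (fun x hx => hg' x (by simpa using hx))
  simpa [hg0] using hmono Set.self_mem_Ici hs hs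

lemma add_two_add_sub_two_mul_exp_nonneg {s : ℝ} (hs : 0 ≤ s) :
    0 ≤ s + 2 + (s - 2) * exp s := by
  refine nonneg_of_hasDerivAt_of_nonneg (g := fun x => x + 2 + (x - 2) * exp x)
    (g' := fun x => 1 + (x - 1) * exp x) (fun x => ?_) (by simp) (fun x _ => ?_) hs
  · exact (((hasDerivAt_id' x).add_const 2).fun_add
      (((hasDerivAt_id' x).sub_const 2).fun_mul (hasDerivAt_exp x))).congr_deriv (by ring)
  · have h1 : (1 - x) * exp x ≤ exp (-x) * exp x :=
      mul_le_mul_of_nonneg_right (by linarith [add_one_le_exp (-x)]) (exp_pos x).le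
    rw [← exp_add, neg_add_cancel, exp_zero] at h1
    linarith

lemma one_sub_div_three_mul_exp_sub_one_sub_le {s : ℝ} (hs : 0 ≤ s) :
    (1 - s / 3) * (exp s - 1 - s) ≤ s ^ 2 / 2 := by
  have hderiv (x : ℝ) : HasDerivAt (fun x => x ^ 2 / 2 - (1 - x / 3) * (exp x - 1 - x))
      ((x + 2 + (x - 2) * exp x) / 3) x :=
    (((hasDerivAt_pow 2 x).div_const 2).fun_sub
      ((((hasDerivAt_id' x).div_const 3).const_sub 1).fun_mul
        (((hasDerivAt_exp x).sub_const 1).fun_sub (hasDerivAt_id' x)))).congr_deriv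
      (by ring)
  have key := nonneg_of_hasDerivAt_of_nonneg hderiv (by simp)
    (fun x hx => div_nonneg (add_two_add_sub_two_mul_exp_nonneg hx.le) zero_le_three) hs
  linarith

lemma exp_neg_sub_one_add_le {s : ℝ} (hs : 0 ≤ s) : exp (-s) - 1 + s ≤ s ^ 2 / 2 := by
  have hderiv (x : ℝ) : HasDerivAt (fun x => x ^ 2 / 2 - (exp (-x) - 1 + x))
      (x + exp (-x) - 1) x :=
    (((hasDerivAt_pow 2 x).div_const 2).fun_sub
      ((((hasDerivAt_neg x).exp).sub_const 1).fun_add (hasDerivAt_id' x))).congr_deriv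
      (by ring)
  have key := nonneg_of_hasDerivAt_of_nonneg hderiv (by simp)
    (fun x _ => by linarith [add_one_le_exp (-x)]) hs
  linarith

lemma exp_sub_one_sub_le_of_abs_lt_three {u : ℝ} (hu : |u| < 3) :
    exp u - 1 - u ≤ u ^ 2 / (2 * (1 - |u| / 3)) := by
  have hpos : 0 < 1 - |u| / 3 := by linarith
  rcases le_or_gt 0 u with hu0 | hu0
  · rw [abs_of_nonneg hu0] at hpos ⊢
    rw [le_div_iff₀ (by positivity)]
    linarith [one_sub_div_three_mul_exp_sub_one_sub_le hu0]
  · rw [abs_of_neg hu0] at hpos ⊢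
    have h := exp_neg_sub_one_add_le (neg_nonneg.2 hu0.le)
    rw [neg_neg, neg_sq] at h
    calc exp u - 1 - u ≤ u ^ 2 / 2 := by linarith
      _ ≤ u ^ 2 / (2 * (1 - -u / 3)) :=
        div_le_div_of_nonneg_left (sq_nonneg u) (by positivity) (by linarith)

section Bernstein

variable {Ω : Type*} [MeasurableSpace Ω] {P : Measure Ω}

lemma measureReal_ge_le_of_mgf_le [IsFiniteMeasure P] {Z : Ω → ℝ} {V t : ℝ} (hV : 0 < V)
    (ht : 0 ≤ t) (hint : ∀ u, Integrable (fun ω => exp (u * Z ω)) P)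
    (hmgf : ∀ u, |u| < 3 → mgf Z P u ≤ exp (V * (u ^ 2 / (2 * (1 - |u| / 3))))) :
    P.real {ω | t ≤ Z ω} ≤ exp (-(t ^ 2 / (2 * (V + t / 3)))) := by
  have hD : 0 < V + t / 3 := by positivity
  -- Chernoff at this `s` turns `-s t + V s² / (2 (1 - s / 3))` into `-t² / (2 (V + t / 3))`.
  set s := t / (V + t / 3) with hs
  have hs0 : 0 ≤ s := by positivity
  have hs3 : 1 - |s| / 3 = V / (V + t / 3) := by
    rw [abs_of_nonneg hs0, hs]; field_simp; ring
  calc P.real {ω | t ≤ Z ω} ≤ exp (-s * t) * mgf Z P s := measure_ge_le_exp_mul_mgf t hs0 (hint s)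
    _ ≤ exp (-s * t) * exp (V * (s ^ 2 / (2 * (1 - |s| / 3)))) := by
        gcongr
        refine hmgf s ?_
        have : 0 < 1 - |s| / 3 := by rw [hs3]; positivity
        linarith
    _ = exp (-(t ^ 2 / (2 * (V + t / 3)))) := by
        rw [← exp_add, hs3, hs]
        congr 1
        field_simp
        ring

lemma measureReal_abs_gt_le_of_mgf_le [IsFiniteMeasure P] {Z : Ω → ℝ} {V t : ℝ} (hV : 0 < V)
    (ht : 0 ≤ t) (hint : ∀ u, Integrable (fun ω => exp (u * Z ω)) P)
    (hmgf : ∀ u, |u| < 3 → mgf Z P u ≤ exp (V * (u ^ 2 / (2 * (1 - |u| / 3))))) :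
    P.real {ω | t < |Z ω|} ≤ 2 * exp (-(t ^ 2 / (2 * (V + t / 3)))) := by
  have hupper := measureReal_ge_le_of_mgf_le hV ht hint hmgf
  have hlower := measureReal_ge_le_of_mgf_le (Z := -Z) hV ht
    (fun u => by simpa using hint (-u))
    (fun u hu => by simpa [mgf_neg] using hmgf (-u) (by rwa [abs_neg]))
  calc P.real {ω | t < |Z ω|} ≤ P.real ({ω | t ≤ Z ω} ∪ {ω | t ≤ (-Z) ω}) := by
        refine measureReal_mono fun ω hω => ?_
        rcases lt_abs.1 (show t < |Z ω| from hω) with h | h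
        exacts [Or.inl h.le, Or.inr h.le]
    _ ≤ P.real {ω | t ≤ Z ω} + P.real {ω | t ≤ (-Z) ω} := measureReal_union_le _ _
    _ ≤ 2 * exp (-(t ^ 2 / (2 * (V + t / 3)))) := by linarith

lemma mgf_indicator_sub_measureReal_le [IsProbabilityMeasure P] {A : Set Ω}
    (hA : MeasurableSet A) (u : ℝ) :
    mgf (fun ω => A.indicator 1 ω - P.real A) P u ≤ exp (P.real A * (exp u - 1 - u)) := by
  set p := P.real A
  have hpoint (ω : Ω) : exp (u * (A.indicator 1 ω - p))
      = exp (-(u * p)) * (1 + (exp u - 1) * A.indicator 1 ω) := by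
    by_cases hω : ω ∈ A
    · rw [Set.indicator_of_mem hω, Pi.one_apply, mul_one, add_sub_cancel, ← exp_add]
      ring_nf
    · rw [Set.indicator_of_notMem hω]
      ring_nf
  calc mgf (fun ω => A.indicator 1 ω - p) P u
      = exp (-(u * p)) * (1 + (exp u - 1) * p) := by
        rw [mgf]
        simp_rw [hpoint]
        rw [integral_const_mul, integral_add (integrable_const _)
          ((integrable_indicator_iff hA).2 (integrable_const 1).integrableOn |>.const_mul _),
          integral_const_mul, integral_indicator_one hA]
        simp [p]
    _ ≤ exp (-(u * p)) * exp ((exp u - 1) * p) := by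
        gcongr
        linarith [add_one_le_exp ((exp u - 1) * p)]
    _ = exp (p * (exp u - 1 - u)) := by
        rw [← exp_add]; ring_nf

variable {ι α : Type*} [MeasurableSpace α] {μ : Measure α} {X : ι → Ω → α}

lemma iIndepFun_indicator_sub (hind : iIndepFun X P) {I : Set α} (hI : MeasurableSet I) (c : ℝ) :
    iIndepFun (fun i ω => I.indicator 1 (X i ω) - c) P :=
  hind.comp (fun _ x => I.indicator 1 x - c) fun _ => (measurable_const.indicator hI).sub_const _

lemma mgf_sum_indicator_sub_le [IsProbabilityMeasure P] [Fintype ι]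
    (hX : ∀ i, Measurable (X i)) (hind : iIndepFun X P)
    (hmap : ∀ i, P.map (X i) = μ) {I : Set α} (hI : MeasurableSet I) (u : ℝ) :
    mgf (∑ i, fun ω => I.indicator 1 (X i ω) - μ.real I) P u
      ≤ exp (Fintype.card ι * μ.real I * (exp u - 1 - u)) := by
  have hY (i : ι) : Measurable fun ω => I.indicator 1 (X i ω) - μ.real I :=
    ((measurable_const.indicator hI).comp (hX i)).sub_const _
  rw [(iIndepFun_indicator_sub hind hI _).mgf_sum hY, ← Finset.card_univ, mul_assoc, exp_nat_mul,
    ← Finset.prod_const]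
  refine Finset.prod_le_prod (fun _ _ => mgf_nonneg) fun i _ => ?_
  have hreal : P.real (X i ⁻¹' I) = μ.real I := by rw [← map_measureReal_apply (hX i) hI, hmap]
  simpa only [hreal, ← Set.indicator_comp_right, Pi.one_comp] using
    mgf_indicator_sub_measureReal_le (P := P) (hX i hI) u

theorem measure_abs_card_filter_sub_gt_le [IsProbabilityMeasure P] [Fintype ι]
    (hX : ∀ i, Measurable (X i)) (hind : iIndepFun X P)
    (hmap : ∀ i, P.map (X i) = μ) {I : Set α} (hI : MeasurableSet I) {V t : ℝ}
    (hV : Fintype.card ι * μ.real I ≤ V) (hV0 : 0 < V) (ht : 0 ≤ t) :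
    P {ω | t < |((Finset.univ.filter fun i => X i ω ∈ I).card : ℝ) - Fintype.card ι * μ.real I|}
      ≤ ENNReal.ofReal (2 * exp (-(t ^ 2 / (2 * (V + t / 3))))) := by
  set Y : ι → Ω → ℝ := fun i ω => I.indicator 1 (X i ω) - μ.real I
  have hY (i : ι) : Measurable (Y i) := ((measurable_const.indicator hI).comp (hX i)).sub_const _
  have hcount (ω : Ω) : ((Finset.univ.filter fun i => X i ω ∈ I).card : ℝ)
      - Fintype.card ι * μ.real I = (∑ i, Y i) ω := by
    simp [Y, Finset.sum_apply, Set.indicator_apply, Finset.sum_sub_distrib]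
  have hint (u : ℝ) : Integrable (fun ω => exp (u * (∑ i, Y i) ω)) P :=
    (iIndepFun_indicator_sub hind hI _).integrable_exp_mul_sum hY fun i _ =>
      integrable_exp_mul_of_mem_Icc (a := -μ.real I) (b := 1 - μ.real I) (hY i).aemeasurable
        (ae_of_all _ fun ω => by
          by_cases h : X i ω ∈ I <;> simp [h])
  have hmgf (u : ℝ) (hu : |u| < 3) :
      mgf (∑ i, Y i) P u ≤ exp (V * (u ^ 2 / (2 * (1 - |u| / 3)))) :=
    (mgf_sum_indicator_sub_le hX hind hmap hI u).trans <| exp_le_exp.2 <|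
      mul_le_mul hV (exp_sub_one_sub_le_of_abs_lt_three hu)
        (by linarith [add_one_le_exp u]) hV0.le
  simp_rw [hcount]
  rw [← ofReal_measureReal]
  exact ENNReal.ofReal_le_ofReal (measureReal_abs_gt_le_of_mgf_le hV0 ht hint hmgf)

end Bernstein

lemma withDensity_ofReal_le_smul {α : Type*} [MeasurableSpace α] (ν : Measure α) {f : α → ℝ}
    {F : ℝ} (hf : ∀ x, f x ≤ F) :
    ν.withDensity (fun x => ENNReal.ofReal (f x)) ≤ ENNReal.ofReal F • ν :=
  (withDensity_mono (ae_of_all _ fun x => ENNReal.ofReal_le_ofReal (hf x))).trans_eq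
    (withDensity_const _)

lemma volume_dyadicI (l k : ℕ) : volume (dyadicI l k) = ENNReal.ofReal (1 / 2 ^ l) := by
  rw [dyadicI, Real.volume_Ico, ← sub_div, add_sub_cancel_left]

lemma measureReal_dyadicI_le {μ : Measure ℝ} {F : ℝ} (hF : 0 ≤ F)
    (hμ : μ ≤ ENNReal.ofReal F • volume) (l k : ℕ) : μ.real (dyadicI l k) ≤ F / 2 ^ l := by
  refine ENNReal.toReal_le_of_le_ofReal (by positivity) ((hμ _).trans_eq ?_)
  rw [Measure.smul_apply, volume_dyadicI, smul_eq_mul, ← ENNReal.ofReal_mul hF, mul_one_div]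

lemma log_two_lt_of_bernstein_threshold {F M : ℝ} (hF : 0 < F)
    (hM : (1 / 3) * (√(log 2) * √(18 * F + log 2) + log 2) < M) :
    0 < M ∧ log 2 < M ^ 2 / (2 * (F + M / 3)) := by
  have hlog : 0 < log 2 := log_pos one_lt_two
  set r := √(log 2) * √(18 * F + log 2)
  have hr : r ^ 2 = log 2 * (18 * F + log 2) := by
    rw [mul_pow, sq_sqrt hlog.le, sq_sqrt (by positivity)]
  have hr0 : 0 ≤ r := by positivity
  have hM0 : 0 < M := by linarith
  refine ⟨hM0, (lt_div_iff₀ (by positivity)).2 ?_⟩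
  nlinarith

lemma rate_mul_le_bernstein_exponent {F M n a q : ℝ} (hF : 0 < F) (hM : 0 < M) (hn : 0 < n)
    (ha : 0 ≤ a) (hq : 0 < q) :
    M ^ 2 / (2 * (F + M / 3)) * a
      ≤ (M * max √(n * a / q) a) ^ 2 / (2 * (n * F / q + M * max √(n * a / q) a / 3)) := by
  set m := max √(n * a / q) a
  have hma : a ≤ m := le_max_right _ _
  have hm2 : n * a / q ≤ m ^ 2 :=
    (sq_sqrt (by positivity)).symm.le.trans (pow_le_pow_left₀ (sqrt_nonneg _) (le_max_left _ _) 2)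
  have hm0 : 0 ≤ m := ha.trans hma
  have hvar : a * (n * F / q + M * m / 3) ≤ m ^ 2 * (F + M / 3) := by
    have h1 : a * (n * F / q) ≤ F * m ^ 2 := by
      calc a * (n * F / q) = F * (n * a / q) := by ring
        _ ≤ F * m ^ 2 := by gcongr
    have h2 : a * (M * m / 3) ≤ M * m ^ 2 / 3 := by
      calc a * (M * m / 3) = M * m / 3 * a := by ring
        _ ≤ M * m / 3 * m := by gcongr
        _ = M * m ^ 2 / 3 := by ring
    linarith
  rw [mul_comm, ← mul_div_assoc, div_le_div_iff₀ (by positivity) (by positivity)]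
  nlinarith [mul_le_mul_of_nonneg_left hvar (sq_nonneg M)]

section Dyadic

variable {Ω : Type*} [MeasurableSpace Ω] {P : Measure Ω}

lemma measure_exists_dyadic_le {E : ℕ → ℕ → Set Ω} {c ρ : ℝ} (hc : 0 ≤ c) (hρ : 0 ≤ ρ)
    (hρ1 : 2 * ρ < 1) (hE : ∀ l k, k < 2 ^ l → P (E l k) ≤ ENNReal.ofReal (c * ρ ^ l)) :
    P {ω | ∃ l k, k < 2 ^ l ∧ ω ∈ E l k} ≤ ENNReal.ofReal (c / (1 - 2 * ρ)) := by
  have hunion : {ω | ∃ l k, k < 2 ^ l ∧ ω ∈ E l k} = ⋃ l, ⋃ k ∈ Finset.range (2 ^ l), E l k := by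
    ext; simp
  calc P {ω | ∃ l k, k < 2 ^ l ∧ ω ∈ E l k}
      ≤ ∑' l, ∑ k ∈ Finset.range (2 ^ l), P (E l k) := by
        rw [hunion]
        exact (measure_iUnion_le _).trans
          (ENNReal.tsum_le_tsum fun l => measure_biUnion_finset_le _ _)
    _ ≤ ∑' l, ENNReal.ofReal c * ENNReal.ofReal (2 * ρ) ^ l := by
        refine ENNReal.tsum_le_tsum fun l => ?_
        calc ∑ k ∈ Finset.range (2 ^ l), P (E l k)
            ≤ ∑ _k ∈ Finset.range (2 ^ l), ENNReal.ofReal (c * ρ ^ l) :=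
              Finset.sum_le_sum fun k hk => hE l k (Finset.mem_range.1 hk)
          _ = ENNReal.ofReal c * ENNReal.ofReal (2 * ρ) ^ l := by
              rw [Finset.sum_const, Finset.card_range, nsmul_eq_mul, ENNReal.ofReal_mul hc,
                ENNReal.ofReal_pow hρ, ENNReal.ofReal_mul zero_le_two, ENNReal.ofReal_ofNat]
              push_cast
              ring
    _ = ENNReal.ofReal (c / (1 - 2 * ρ)) := by
        rw [ENNReal.tsum_mul_left, ENNReal.tsum_geometric, ← ENNReal.ofReal_one,
          ← ENNReal.ofReal_sub _ (by positivity), ← ENNReal.ofReal_inv_of_pos (by linarith),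
          ← ENNReal.ofReal_mul hc, div_eq_mul_inv]

lemma measure_dyadic_deviation_gt_le [IsProbabilityMeasure P] {μ : Measure ℝ} {F M : ℝ}
    (hF : 0 < F) (hM : 0 < M) (hμ : μ ≤ ENNReal.ofReal F • volume) {n : ℕ} (hn : 1 ≤ n)
    {X : Fin n → Ω → ℝ} (hX : ∀ i, Measurable (X i)) (hind : iIndepFun X P)
    (hmap : ∀ i, P.map (X i) = μ) (L l k : ℕ) :
    P {ω | M * max (√(n * ((l : ℝ) + L) / 2 ^ l)) ((l : ℝ) + L) <
        |((Finset.univ.filter fun i => X i ω ∈ dyadicI l k).card : ℝ) -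
          n * (μ (dyadicI l k)).toReal|}
      ≤ ENNReal.ofReal (2 * exp (-(M ^ 2 / (2 * (F + M / 3)) * ((l : ℝ) + L)))) := by
  have hn0 : (0 : ℝ) < n := by exact_mod_cast hn
  have hV : n * μ.real (dyadicI l k) ≤ n * F / 2 ^ l := by
    rw [mul_div_assoc]
    exact mul_le_mul_of_nonneg_left (measureReal_dyadicI_le hF.le hμ l k) hn0.le
  have key := measure_abs_card_filter_sub_gt_le hX hind hmap (I := dyadicI l k)
    (V := n * F / 2 ^ l) (t := M * max (√(n * ((l : ℝ) + L) / 2 ^ l)) ((l : ℝ) + L))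
    measurableSet_Ico (by rw [Fintype.card_fin]; exact hV) (by positivity) (by positivity)
  rw [Fintype.card_fin] at key
  refine key.trans (ENNReal.ofReal_le_ofReal ?_)
  gcongr
  exact rate_mul_le_bernstein_exponent hF hM hn0 (by positivity) (by positivity)

end Dyadic

theorem stmt_9_general (μ : Measure ℝ)
    (f₀ : ℝ → ℝ) (F : ℝ) (hF : 0 < F)
    (hdens : μ = volume.withDensity fun x => ENNReal.ofReal (f₀ x))
    (hbound : ∀ x, f₀ x ≤ F) :
    ∀ M : ℝ,
      (1 / 3) * (Real.sqrt (Real.log 2) * Real.sqrt (18 * F + Real.log 2) + Real.log 2) < M →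
      ∃ C > 0, ∀ n : ℕ, 1 ≤ n → ∀ L : ℕ,
        ∀ (Ω : Type) (_ : MeasurableSpace Ω) (P : Measure Ω), IsProbabilityMeasure P →
          ∀ X : Fin n → Ω → ℝ, (∀ i, Measurable (X i)) →
            iIndepFun X P →
            (∀ i, Measure.map (X i) P = μ) →
            P {ω | ∃ l k : ℕ, k < 2 ^ l ∧
                M * max (Real.sqrt ((n : ℝ) * ((l : ℝ) + L) / 2 ^ l)) ((l : ℝ) + L) <
                  |((Finset.univ.filter fun i => X i ω ∈ dyadicI l k).card : ℝ) -
                    (n : ℝ) * (μ (dyadicI l k)).toReal|}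
              ≤ ENNReal.ofReal (C * 2 ^ (-(L : ℝ))) := by
  intro M hM
  obtain ⟨hM0, hβ⟩ := log_two_lt_of_bernstein_threshold hF hM
  set β := M ^ 2 / (2 * (F + M / 3))
  have hρ : 2 * exp (-β) < 1 := by
    rw [← exp_log two_pos, ← exp_add, exp_lt_one_iff]
    linarith
  have hμ : μ ≤ ENNReal.ofReal F • volume := hdens ▸ withDensity_ofReal_le_smul volume hbound
  refine ⟨2 / (1 - 2 * exp (-β)), div_pos two_pos (by linarith),
    fun n hn L Ω _ P _ X hX hind hmap => ?_⟩
  have hL : exp (-β * L) ≤ 2 ^ (-(L : ℝ)) := by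
    rw [rpow_def_of_pos two_pos, exp_le_exp]
    nlinarith [(L.cast_nonneg : (0 : ℝ) ≤ L)]
  calc _ ≤ ENNReal.ofReal (2 * exp (-β * L) / (1 - 2 * exp (-β))) :=
        measure_exists_dyadic_le (by positivity) (exp_pos _).le hρ fun l k _ =>
          (measure_dyadic_deviation_gt_le hF hM0 hμ hn hX hind hmap L l k).trans_eq <| by
            rw [← exp_nat_mul, mul_assoc, ← exp_add]
            congr 3
            simp only [β]
            ring
    _ ≤ ENNReal.ofReal (2 / (1 - 2 * exp (-β)) * 2 ^ (-(L : ℝ))) := by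
        rw [div_mul_eq_mul_div]
        exact ENNReal.ofReal_le_ofReal (div_le_div_of_nonneg_right (by gcongr) (by linarith))

/-- Let `μ` be a Borel probability measure on `[0,1)` with Lebesgue density
`f₀ ≤ F` for some `F > 0`. For every `M > (1/3)(√(log 2) √(18F + log 2) + log 2)` there is
`C > 0` (depending only on `F, M`) such that for every `n ≥ 1`, `L ∈ ℕ`, and i.i.d. sample
`X₁, …, Xₙ ~ μ`, the probability that for some dyadic interval `I_{l,k}` the count deviation
`|#{i : Xᵢ ∈ I_{l,k}} − n μ(I_{l,k})|` exceeds `M max(√(n(l+L)2^{-l}), l+L)` is at most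
`C 2^{-L}`. -/
theorem stmt_9 (μ : Measure ℝ) [IsProbabilityMeasure μ]
    (f₀ : ℝ → ℝ) (F : ℝ) (hF : 0 < F)
    (hdens : μ = volume.withDensity fun x => ENNReal.ofReal (f₀ x))
    (hsupp : μ (Set.Ico (0 : ℝ) 1)ᶜ = 0)
    (hbound : ∀ x, f₀ x ≤ F) :
    ∀ M : ℝ,
      (1 / 3) * (Real.sqrt (Real.log 2) * Real.sqrt (18 * F + Real.log 2) + Real.log 2) < M →
      ∃ C > 0, ∀ n : ℕ, 1 ≤ n → ∀ L : ℕ,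
        ∀ (Ω : Type) (_ : MeasurableSpace Ω) (P : Measure Ω), IsProbabilityMeasure P →
          ∀ X : Fin n → Ω → ℝ, (∀ i, Measurable (X i)) →
            iIndepFun X P →
            (∀ i, Measure.map (X i) P = μ) →
            P {ω | ∃ l k : ℕ, k < 2 ^ l ∧
                M * max (Real.sqrt ((n : ℝ) * ((l : ℝ) + L) / 2 ^ l)) ((l : ℝ) + L) <
                  |((Finset.univ.filter fun i => X i ω ∈ dyadicI l k).card : ℝ) -
                    (n : ℝ) * (μ (dyadicI l k)).toReal|}
              ≤ ENNReal.ofReal (C * 2 ^ (-(L : ℝ))) :=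
  stmt_9_general μ f₀ F hF hdens hbound
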